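/- Let k ≥ 1, α ∈ (0,1), θ ∈ Δ([k]), and let P be a nonzero measure on a product 𝒳₁ × … × 𝒳ₖ of finite sets. Then H_{α,θ}(P) ≤ Σ_{j=1}^k θ(j) H_α(P_j/‖P‖₁) + (α/(1−α)) log₂ ‖P‖₁, and consequently H_{α,θ}(P) ≤ Σ_{j=1}^k θ(j) log₂ |supp P_j| + (α/(1−α)) log₂ ‖P‖₁. -/

import Mathlib

open Finset

noncomputable section

/-- A probability distribution on a finite set. -/
def probVec {X : Type*} [Fintype X] (Q : X → ℝ) : Prop :=
  (∀ x, 0 ≤ Q x) ∧ ∑ x, Q x = 1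

/-- Shannon entropy (base 2) of a measure on a finite set; `0 · log 0 = 0`. -/
def shEnt {X : Type*} [Fintype X] (Q : X → ℝ) : ℝ :=
  -∑ x, Q x * Real.logb 2 (Q x)

/-- Kullback–Leibler divergence (base 2); terms with `Q x = 0` vanish. -/
def klD {X : Type*} [Fintype X] (Q P : X → ℝ) : ℝ :=
  ∑ x, Q x * Real.logb 2 (Q x / P x)

/-- `j`-th marginal of a measure on a finite product. -/
def marg {k : ℕ} {𝒳 : Fin k → Type*} [∀ j, Fintype (𝒳 j)] [∀ j, DecidableEq (𝒳 j)]
    (P : (∀ j, 𝒳 j) → ℝ) (j : Fin k) : 𝒳 j → ℝ :=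
  fun a => ∑ x : ∀ i, 𝒳 i, if x j = a then P x else 0

/-- The functional `H_{α,θ}(P)`. -/
def Hat {k : ℕ} {𝒳 : Fin k → Type*} [∀ j, Fintype (𝒳 j)] [∀ j, DecidableEq (𝒳 j)]
    (α : ℝ) (θ : Fin k → ℝ) (P : (∀ j, 𝒳 j) → ℝ) : ℝ :=
  sSup { v : ℝ | ∃ Q : (∀ j, 𝒳 j) → ℝ, probVec Q ∧ (∀ x, P x = 0 → Q x = 0) ∧
    v = (∑ j, θ j * shEnt (marg Q j)) - α / (1 - α) * klD Q P }

/-- Rényi entropy of order `α` of a measure on a finite set. -/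
def renyiEnt {X : Type*} [Fintype X] (α : ℝ) (μ : X → ℝ) : ℝ :=
  (1 / (1 - α)) * Real.logb 2 (∑ x, μ x ^ α)

/-- Jensen / Gibbs inequality for `logb 2`. -/
lemma gibbs_logb {ι : Type*} (s : Finset ι) (w f : ι → ℝ)
    (hw : ∀ i ∈ s, 0 ≤ w i) (hw1 : ∑ i ∈ s, w i = 1)
    (hf : ∀ i ∈ s, w i ≠ 0 → 0 < f i) :
    ∑ i ∈ s, w i * Real.logb 2 (f i) ≤ Real.logb 2 (∑ i ∈ s, w i * f i) := by
  set T := ∑ i ∈ s, w i * f i with hT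
  have hterm : ∀ i ∈ s, 0 ≤ w i * f i := by
    intro i hi
    rcases eq_or_ne (w i) 0 with h | h
    · simp [h]
    · exact mul_nonneg (hw i hi) (hf i hi h).le
  obtain ⟨i₀, hi₀s, hi₀⟩ : ∃ i ∈ s, w i ≠ 0 := by
    by_contra h
    push_neg at h
    have : ∑ i ∈ s, w i = 0 := Finset.sum_eq_zero h
    rw [this] at hw1; norm_num at hw1
  have hT0 : 0 < T := by
    have h1 : w i₀ * f i₀ ≤ T := Finset.single_le_sum hterm hi₀s
    have h2 : 0 < w i₀ * f i₀ :=
      mul_pos (lt_of_le_of_ne (hw i₀ hi₀s) (Ne.symm hi₀)) (hf i₀ hi₀s hi₀)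
    linarith
  have hlog2 : (0:ℝ) < Real.log 2 := Real.log_pos one_lt_two
  have key : ∀ i ∈ s, w i * Real.logb 2 (f i) ≤
      w i * Real.logb 2 T + (w i * f i / T - w i) / Real.log 2 := by
    intro i hi
    rcases eq_or_ne (w i) 0 with h | h
    · simp [h]
    · have hwpos : 0 < w i := lt_of_le_of_ne (hw i hi) (Ne.symm h)
      have hfi : 0 < f i := hf i hi h
      have hdiv : Real.logb 2 (f i) = Real.logb 2 T + Real.logb 2 (f i / T) := by
        rw [Real.logb_div hfi.ne' hT0.ne']; ring
      have hlb : Real.logb 2 (f i / T) ≤ (f i / T - 1) / Real.log 2 := by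
        have := Real.log_le_sub_one_of_pos (div_pos hfi hT0)
        rw [Real.logb]
        gcongr
      calc w i * Real.logb 2 (f i)
          = w i * Real.logb 2 T + w i * Real.logb 2 (f i / T) := by rw [hdiv]; ring
        _ ≤ w i * Real.logb 2 T + w i * ((f i / T - 1) / Real.log 2) := by
            have := mul_le_mul_of_nonneg_left hlb hwpos.le
            linarith
        _ = w i * Real.logb 2 T + (w i * f i / T - w i) / Real.log 2 := by ring
  calc ∑ i ∈ s, w i * Real.logb 2 (f i)
      ≤ ∑ i ∈ s, (w i * Real.logb 2 T + (w i * f i / T - w i) / Real.log 2) :=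
        Finset.sum_le_sum key
    _ = (∑ i ∈ s, w i) * Real.logb 2 T +
        ((∑ i ∈ s, w i * f i) / T - ∑ i ∈ s, w i) / Real.log 2 := by
        rw [Finset.sum_add_distrib, ← Finset.sum_mul, ← Finset.sum_div,
          Finset.sum_sub_distrib, ← Finset.sum_div]
    _ = Real.logb 2 T := by
        rw [hw1, ← hT, div_self hT0.ne']
        simp

/-- Log-sum inequality. -/
lemma logsum_logb {ι : Type*} (s : Finset ι) (a b : ι → ℝ)
    (ha : ∀ i ∈ s, 0 ≤ a i) (hb : ∀ i ∈ s, 0 ≤ b i)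
    (hab : ∀ i ∈ s, b i = 0 → a i = 0) :
    (∑ i ∈ s, a i) * Real.logb 2 ((∑ i ∈ s, a i) / (∑ i ∈ s, b i)) ≤
      ∑ i ∈ s, a i * Real.logb 2 (a i / b i) := by
  set A := ∑ i ∈ s, a i with hA
  set B := ∑ i ∈ s, b i with hB
  rcases eq_or_ne A 0 with h0 | h0
  · have hzero : ∀ i ∈ s, a i = 0 := by
      rw [hA] at h0
      exact (Finset.sum_eq_zero_iff_of_nonneg ha).mp h0
    rw [h0, zero_mul]
    apply Finset.sum_nonneg
    intro i hi
    rw [hzero i hi]; simp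
  · have hApos : 0 < A := lt_of_le_of_ne (Finset.sum_nonneg ha) (Ne.symm h0)
    obtain ⟨i₀, hi₀s, hi₀⟩ : ∃ i ∈ s, a i ≠ 0 := by
      by_contra h
      push_neg at h
      exact h0 (Finset.sum_eq_zero h)
    have hbi₀ : 0 < b i₀ := by
      rcases eq_or_ne (b i₀) 0 with h | h
      · exact absurd (hab i₀ hi₀s h) hi₀
      · exact lt_of_le_of_ne (hb i₀ hi₀s) (Ne.symm h)
    have hBpos : 0 < B := by
      have h1 : b i₀ ≤ B := Finset.single_le_sum hb hi₀s
      linarith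
    -- apply Gibbs with w i = a i / A, f i = b i / a i
    have hgibbs := gibbs_logb s (fun i => a i / A) (fun i => b i / a i)
      (fun i hi => div_nonneg (ha i hi) hApos.le)
      (by rw [← Finset.sum_div, ← hA, div_self h0])
      (by
        intro i hi h
        have hai : a i ≠ 0 := by
          intro h'
          apply h; simp [h']
        have haipos : 0 < a i := lt_of_le_of_ne (ha i hi) (Ne.symm hai)
        have hbipos : 0 < b i := by
          rcases eq_or_ne (b i) 0 with h' | h'
          · exact absurd (hab i hi h') hai
          · exact lt_of_le_of_ne (hb i hi) (Ne.symm h')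
        exact div_pos hbipos haipos)
    set S := ∑ i ∈ s, a i / A * (b i / a i) with hS
    have hSle : S ≤ B / A := by
      rw [hS, hB, Finset.sum_div]
      apply Finset.sum_le_sum
      intro i hi
      rcases eq_or_ne (a i) 0 with h | h
      · simp [h]
        exact div_nonneg (hb i hi) hApos.le
      · apply le_of_eq
        field_simp
    have hSpos : 0 < S := by
      have h1 : a i₀ / A * (b i₀ / a i₀) ≤ S := by
        apply Finset.single_le_sum _ hi₀s
        intro i hi
        exact mul_nonneg (div_nonneg (ha i hi) hApos.le)
          (div_nonneg (hb i hi) (ha i hi))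
      have h2 : 0 < a i₀ / A * (b i₀ / a i₀) := by
        have haipos : 0 < a i₀ := lt_of_le_of_ne (ha i₀ hi₀s) (Ne.symm hi₀)
        exact mul_pos (div_pos haipos hApos) (div_pos hbi₀ haipos)
      linarith
    have hmono : Real.logb 2 S ≤ Real.logb 2 (B / A) :=
      Real.logb_le_logb_of_le one_lt_two hSpos hSle
    have h1 : ∑ i ∈ s, a i * Real.logb 2 (b i / a i) ≤ A * Real.logb 2 (B / A) := by
      have h2 : ∑ i ∈ s, a i * Real.logb 2 (b i / a i) =
          A * ∑ i ∈ s, a i / A * Real.logb 2 (b i / a i) := by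
        rw [Finset.mul_sum]
        apply Finset.sum_congr rfl
        intro i hi
        field_simp
      rw [h2]
      exact mul_le_mul_of_nonneg_left (le_trans hgibbs hmono) hApos.le
    have h2 : ∀ i ∈ s, a i * Real.logb 2 (a i / b i) = -(a i * Real.logb 2 (b i / a i)) := by
      intro i hi
      rcases eq_or_ne (a i) 0 with h | h
      · simp [h]
      · have hbipos : 0 < b i := by
          rcases eq_or_ne (b i) 0 with h' | h'
          · exact absurd (hab i hi h') h
          · exact lt_of_le_of_ne (hb i hi) (Ne.symm h')
        rw [Real.logb_div h hbipos.ne', Real.logb_div hbipos.ne' h]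
        ring
    rw [Finset.sum_congr rfl h2, Finset.sum_neg_distrib]
    have h3 : Real.logb 2 (A / B) = -Real.logb 2 (B / A) := by
      rw [Real.logb_div h0 hBpos.ne', Real.logb_div hBpos.ne' h0]
      ring
    rw [h3]
    linarith

/-- Variational upper bound: `H(Q) ≤ (1/(1-α)) log₂ ∑ μ^α + (α/(1-α)) D(Q‖μ)`. -/
lemma varBound {X : Type*} [Fintype X] {α : ℝ} (hα : α ∈ Set.Ioo (0:ℝ) 1)
    (μ Q : X → ℝ) (hμ : ∀ x, 0 ≤ μ x) (hQ : probVec Q)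
    (hs : ∀ x, μ x = 0 → Q x = 0) :
    shEnt Q ≤ (1/(1-α)) * Real.logb 2 (∑ x, μ x ^ α) + α/(1-α) * klD Q μ := by
  obtain ⟨hα0, hα1⟩ := hα
  have h1α : (0:ℝ) < 1 - α := by linarith
  have hμpos : ∀ x, Q x ≠ 0 → 0 < μ x := by
    intro x hx
    rcases eq_or_ne (μ x) 0 with h | h
    · exact absurd (hs x h) hx
    · exact lt_of_le_of_ne (hμ x) (Ne.symm h)
  have hQpos : ∀ x, Q x ≠ 0 → 0 < Q x := fun x hx =>
    lt_of_le_of_ne (hQ.1 x) (Ne.symm hx)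
  have perterm : ∀ x, -(Q x * Real.logb 2 (Q x)) - α/(1-α) * (Q x * Real.logb 2 (Q x / μ x))
      = 1/(1-α) * (Q x * Real.logb 2 (μ x ^ α / Q x)) := by
    intro x
    rcases eq_or_ne (Q x) 0 with hq | hq
    · simp [hq]
    · have hμx := hμpos x hq
      have hqx := hQpos x hq
      rw [Real.logb_div hq hμx.ne', Real.logb_div (Real.rpow_pos_of_pos hμx α).ne' hq,
        Real.logb_rpow_eq_mul_logb_of_pos hμx]
      field_simp
      ring
  have key : shEnt Q - α/(1-α) * klD Q μ =
      (1/(1-α)) * ∑ x, Q x * Real.logb 2 (μ x ^ α / Q x) := by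
    calc shEnt Q - α/(1-α) * klD Q μ
        = ∑ x, (-(Q x * Real.logb 2 (Q x)) - α/(1-α) * (Q x * Real.logb 2 (Q x / μ x))) := by
          rw [shEnt, klD, Finset.mul_sum, ← Finset.sum_neg_distrib, ← Finset.sum_sub_distrib]
      _ = ∑ x, 1/(1-α) * (Q x * Real.logb 2 (μ x ^ α / Q x)) :=
          Finset.sum_congr rfl (fun x _ => perterm x)
      _ = (1/(1-α)) * ∑ x, Q x * Real.logb 2 (μ x ^ α / Q x) := by rw [Finset.mul_sum]
  have hb := gibbs_logb Finset.univ Q (fun x => μ x ^ α / Q x) (fun x _ => hQ.1 x) hQ.2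
    (fun x _ hx => div_pos (Real.rpow_pos_of_pos (hμpos x hx) α) (hQpos x hx))
  have hle : ∑ x, Q x * (μ x ^ α / Q x) ≤ ∑ x, μ x ^ α := by
    apply Finset.sum_le_sum
    intro x _
    rcases eq_or_ne (Q x) 0 with hq | hq
    · simp [hq]
      exact Real.rpow_nonneg (hμ x) α
    · rw [mul_div_cancel₀ _ hq]
  obtain ⟨x₀, hx₀⟩ : ∃ x, Q x ≠ 0 := by
    by_contra h
    push_neg at h
    have : ∑ x, Q x = 0 := Finset.sum_eq_zero (fun x _ => h x)
    rw [hQ.2] at this; norm_num at this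
  have hpos : 0 < ∑ x, Q x * (μ x ^ α / Q x) := by
    have h1 : Q x₀ * (μ x₀ ^ α / Q x₀) ≤ ∑ x, Q x * (μ x ^ α / Q x) := by
      apply Finset.single_le_sum _ (Finset.mem_univ x₀)
      intro x _
      exact mul_nonneg (hQ.1 x) (div_nonneg (Real.rpow_nonneg (hμ x) α) (hQ.1 x))
    have h2 : 0 < Q x₀ * (μ x₀ ^ α / Q x₀) :=
      mul_pos (hQpos x₀ hx₀)
        (div_pos (Real.rpow_pos_of_pos (hμpos x₀ hx₀) α) (hQpos x₀ hx₀))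
    linarith
  have hmono := Real.logb_le_logb_of_le one_lt_two hpos hle
  have hfin := mul_le_mul_of_nonneg_left (le_trans hb hmono)
    (by positivity : (0:ℝ) ≤ 1/(1-α))
  linarith

variable {k : ℕ} {𝒳 : Fin k → Type*} [∀ j, Fintype (𝒳 j)] [∀ j, DecidableEq (𝒳 j)]

lemma marg_eq_sum_filter (P : (∀ j, 𝒳 j) → ℝ) (j : Fin k) (a : 𝒳 j) :
    marg P j a = ∑ x ∈ Finset.univ.filter (fun x : ∀ i, 𝒳 i => x j = a), P x := by
  rw [marg, Finset.sum_filter]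

lemma marg_nonneg {P : (∀ j, 𝒳 j) → ℝ} (hP : ∀ x, 0 ≤ P x) (j : Fin k) (a : 𝒳 j) :
    0 ≤ marg P j a := by
  apply Finset.sum_nonneg
  intro x _
  split <;> simp [hP x]

lemma marg_sum (P : (∀ j, 𝒳 j) → ℝ) (j : Fin k) :
    ∑ a, marg P j a = ∑ x, P x := by
  simp only [marg]
  rw [Finset.sum_comm]
  apply Finset.sum_congr rfl
  intro x _
  simp

lemma marg_supp {Q P : (∀ j, 𝒳 j) → ℝ} (hP : ∀ x, 0 ≤ P x)
    (hs : ∀ x, P x = 0 → Q x = 0) (j : Fin k) (a : 𝒳 j)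
    (h : marg P j a = 0) : marg Q j a = 0 := by
  rw [marg_eq_sum_filter] at h ⊢
  have hz := (Finset.sum_eq_zero_iff_of_nonneg (fun x _ => hP x)).mp h
  exact Finset.sum_eq_zero (fun x hx => hs x (hz x hx))

lemma klD_marg_le (Q P : (∀ j, 𝒳 j) → ℝ) (hQ0 : ∀ x, 0 ≤ Q x) (hP0 : ∀ x, 0 ≤ P x)
    (hs : ∀ x, P x = 0 → Q x = 0) (j : Fin k) :
    klD (marg Q j) (marg P j) ≤ klD Q P := by
  rw [klD, klD]
  have hfib : ∑ x : ∀ i, 𝒳 i, Q x * Real.logb 2 (Q x / P x) =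
      ∑ a : 𝒳 j, ∑ x ∈ Finset.univ.filter (fun x : ∀ i, 𝒳 i => x j = a),
        Q x * Real.logb 2 (Q x / P x) := by
    rw [Finset.sum_fiberwise_of_maps_to (fun x _ => Finset.mem_univ (x j))]
  rw [hfib]
  apply Finset.sum_le_sum
  intro a _
  rw [marg_eq_sum_filter, marg_eq_sum_filter]
  exact logsum_logb _ Q P (fun x _ => hQ0 x) (fun x _ => hP0 x) (fun x _ h => hs x h)

/-- Rényi entropy of a probability vector is at most log of its support size. -/
lemma renyi_le_logb_card {X : Type*} [Fintype X] {α : ℝ} (hα : α ∈ Set.Ioo (0:ℝ) 1)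
    (ν : X → ℝ) (hν : probVec ν) :
    renyiEnt α ν ≤ Real.logb 2 (Set.ncard {a : X | ν a ≠ 0}) := by
  classical
  obtain ⟨hα0, hα1⟩ := hα
  have h1α : (0:ℝ) < 1 - α := by linarith
  set S : Finset X := Finset.univ.filter (fun a => ν a ≠ 0) with hSdef
  have hcard : Set.ncard {a : X | ν a ≠ 0} = S.card := by
    rw [hSdef, ← Set.ncard_coe_finset]
    congr 1
    ext a
    simp
  obtain ⟨a₀, ha₀⟩ : ∃ a, ν a ≠ 0 := by
    by_contra h
    push_neg at h
    have : ∑ a, ν a = 0 := Finset.sum_eq_zero (fun a _ => h a)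
    rw [hν.2] at this; norm_num at this
  have ha₀S : a₀ ∈ S := by simp [hSdef, ha₀]
  have hm0 : 0 < (S.card : ℝ) := by
    have : 0 < S.card := Finset.card_pos.mpr ⟨a₀, ha₀S⟩
    exact_mod_cast this
  set m : ℝ := (S.card : ℝ) with hm
  -- restrict the sum to the support
  have hsum : ∑ a, ν a ^ α = ∑ a ∈ S, ν a ^ α := by
    symm
    apply Finset.sum_subset (Finset.subset_univ S)
    intro x _ hx
    have : ν x = 0 := by
      by_contra h
      exact hx (by simp [hSdef, h])
    rw [this, Real.zero_rpow hα0.ne']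
  have hsumS : ∑ a ∈ S, ν a = 1 := by
    rw [← hν.2]
    apply Finset.sum_subset (Finset.subset_univ S)
    intro x _ hx
    by_contra h
    exact hx (by simp [hSdef, h])
  -- Jensen: ∑_{S} ν^α ≤ m^(1-α)
  have hνn : ∀ a ∈ S, 0 ≤ ν a := fun a _ => hν.1 a
  have hjen := Real.arith_mean_le_rpow_mean S (fun _ => 1/m) (fun a => ν a ^ α)
    (fun a _ => by positivity) (by
      rw [Finset.sum_const, nsmul_eq_mul, hm]
      field_simp
      exact div_self (ne_of_gt hm0))
    (fun a _ => Real.rpow_nonneg (hν.1 a) α) (p := 1/α)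
    (by rw [le_div_iff₀ hα0]; linarith)
  have hz : ∀ a ∈ S, (fun a => ν a ^ α) a ^ (1/α : ℝ) = ν a := by
    intro a _
    simp only
    rw [← Real.rpow_mul (hν.1 a), mul_one_div_cancel hα0.ne', Real.rpow_one]
  have hjen2 : ∑ a ∈ S, (1/m) * ν a ^ α ≤ (1/m) ^ (α : ℝ) := by
    have hR : ∑ a ∈ S, (1/m) * ((fun a => ν a ^ α) a) ^ (1/α : ℝ) = 1/m := by
      rw [Finset.sum_congr rfl (fun a ha => by rw [hz a ha]), ← Finset.mul_sum, hsumS,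
        mul_one]
    rw [one_div_one_div] at hjen
    calc ∑ a ∈ S, (1/m) * ν a ^ α ≤
        (∑ a ∈ S, (1/m) * ((fun a => ν a ^ α) a) ^ (1/α : ℝ)) ^ (α : ℝ) := hjen
      _ = (1/m) ^ (α : ℝ) := by rw [hR]
  have hsle : ∑ a ∈ S, ν a ^ α ≤ m ^ (1 - α : ℝ) := by
    have h1 : ∑ a ∈ S, ν a ^ α = m * ∑ a ∈ S, (1/m) * ν a ^ α := by
      rw [Finset.mul_sum]
      apply Finset.sum_congr rfl
      intro a _
      field_simp
    have h2 : m * (1/m) ^ (α : ℝ) = m ^ (1 - α : ℝ) := by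
      rw [one_div, ← Real.rpow_neg_one m, ← Real.rpow_mul hm0.le,
        show (1:ℝ) - α = 1 + (-1)*α by ring, Real.rpow_add hm0, Real.rpow_one]
    rw [h1, ← h2]
    exact mul_le_mul_of_nonneg_left hjen2 hm0.le
  have hspos : 0 < ∑ a, ν a ^ α := by
    have h1 : ν a₀ ^ α ≤ ∑ a, ν a ^ α :=
      Finset.single_le_sum (fun a _ => Real.rpow_nonneg (hν.1 a) α) (Finset.mem_univ a₀)
    have h2 : 0 < ν a₀ ^ α :=
      Real.rpow_pos_of_pos (lt_of_le_of_ne (hν.1 a₀) (Ne.symm ha₀)) α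
    linarith
  rw [renyiEnt, hcard]
  have hmono : Real.logb 2 (∑ a, ν a ^ α) ≤ Real.logb 2 (m ^ (1 - α : ℝ)) := by
    apply Real.logb_le_logb_of_le one_lt_two hspos
    rw [hsum]
    exact hsle
  have hrw : Real.logb 2 (m ^ (1 - α : ℝ)) = (1 - α) * Real.logb 2 m :=
    Real.logb_rpow_eq_mul_logb_of_pos hm0
  have := mul_le_mul_of_nonneg_left hmono (by positivity : (0:ℝ) ≤ 1/(1-α))
  rw [hrw] at this
  calc (1/(1-α)) * Real.logb 2 (∑ a, ν a ^ α) ≤ (1/(1-α)) * ((1-α) * Real.logb 2 m) := this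
    _ = Real.logb 2 m := by field_simp

/-- upper bounds on `H_{α,θ}(P)` in terms of the Rényi entropies of the
normalised marginals, and in terms of the sizes of the supports of the marginals. -/
theorem stmt4 {k : ℕ} (hk : 1 ≤ k) (𝒳 : Fin k → Type)
    [∀ i, Fintype (𝒳 i)] [∀ i, DecidableEq (𝒳 i)]
    (α : ℝ) (hα : α ∈ Set.Ioo (0 : ℝ) 1) (θ : Fin k → ℝ) (hθ : probVec θ)
    (P : (∀ i, 𝒳 i) → ℝ) (hP0 : ∀ x, 0 ≤ P x) (hPne : P ≠ 0) :
    Hat α θ P ≤ (∑ j, θ j * renyiEnt α (fun a => marg P j a / (∑ x, P x))) +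
        α / (1 - α) * Real.logb 2 (∑ x, P x) ∧
    Hat α θ P ≤ (∑ j, θ j * Real.logb 2 (Set.ncard {a : 𝒳 j | marg P j a ≠ 0})) +
        α / (1 - α) * Real.logb 2 (∑ x, P x) := by
  obtain ⟨hα0, hα1⟩ := hα
  have h1α : (0:ℝ) < 1 - α := by linarith
  have hc : (0:ℝ) ≤ α / (1 - α) := by positivity
  set N := ∑ x, P x with hN
  obtain ⟨x₀, hx₀⟩ : ∃ x, P x ≠ 0 := by
    by_contra h
    push_neg at h
    exact hPne (funext h)
  have hx₀pos : 0 < P x₀ := lt_of_le_of_ne (hP0 x₀) (Ne.symm hx₀)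
  have hNpos : 0 < N := lt_of_lt_of_le hx₀pos
    (Finset.single_le_sum (fun x _ => hP0 x) (Finset.mem_univ x₀))
  -- Rényi entropy of the normalised marginal vs the unnormalised one
  have hrenyi : ∀ j, (1/(1-α)) * Real.logb 2 (∑ a, marg P j a ^ α)
      = renyiEnt α (fun a => marg P j a / N) + α/(1-α) * Real.logb 2 N := by
    intro j
    have hmargsum : ∑ a, marg P j a = N := marg_sum P j
    obtain ⟨a₀, ha₀⟩ : ∃ a, marg P j a ≠ 0 := by
      by_contra h
      push_neg at h
      rw [Finset.sum_eq_zero (fun a _ => h a)] at hmargsum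
      exact hNpos.ne hmargsum
    have ha₀pos : 0 < marg P j a₀ := lt_of_le_of_ne (marg_nonneg hP0 j a₀) (Ne.symm ha₀)
    have hpos : 0 < ∑ a, marg P j a ^ α := by
      have h1 : marg P j a₀ ^ α ≤ ∑ a, marg P j a ^ α :=
        Finset.single_le_sum (fun a _ => Real.rpow_nonneg (marg_nonneg hP0 j a) α)
          (Finset.mem_univ a₀)
      have h2 : 0 < marg P j a₀ ^ α := Real.rpow_pos_of_pos ha₀pos α
      linarith
    have hdivsum : ∑ a, (marg P j a / N) ^ α = (∑ a, marg P j a ^ α) / N ^ α := by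
      rw [Finset.sum_div]
      apply Finset.sum_congr rfl
      intro a _
      rw [Real.div_rpow (marg_nonneg hP0 j a) hNpos.le]
    rw [renyiEnt, hdivsum, Real.logb_div hpos.ne' (Real.rpow_pos_of_pos hNpos α).ne',
      Real.logb_rpow_eq_mul_logb_of_pos hNpos]
    ring
  -- nonemptiness of the defining set
  set Q₀ : (∀ i, 𝒳 i) → ℝ := fun x => if x = x₀ then (1:ℝ) else 0 with hQ₀def
  have hQ₀ : probVec Q₀ := by
    constructor
    · intro x
      rw [hQ₀def]
      dsimp only
      split <;> norm_num
    · rw [hQ₀def]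
      simp
  have hsupp₀ : ∀ x, P x = 0 → Q₀ x = 0 := by
    intro x hx
    rw [hQ₀def]
    dsimp only
    rw [if_neg]
    rintro rfl
    exact hx₀ hx
  have hne : Set.Nonempty { v : ℝ | ∃ Q : (∀ j, 𝒳 j) → ℝ, probVec Q ∧
      (∀ x, P x = 0 → Q x = 0) ∧
      v = (∑ j, θ j * shEnt (marg Q j)) - α / (1 - α) * klD Q P } :=
    ⟨_, Q₀, hQ₀, hsupp₀, rfl⟩
  -- the main per-Q bound
  have hbound : ∀ v ∈ { v : ℝ | ∃ Q : (∀ j, 𝒳 j) → ℝ, probVec Q ∧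
      (∀ x, P x = 0 → Q x = 0) ∧
      v = (∑ j, θ j * shEnt (marg Q j)) - α / (1 - α) * klD Q P },
      v ≤ (∑ j, θ j * renyiEnt α (fun a => marg P j a / N)) +
        α / (1 - α) * Real.logb 2 N := by
    rintro v ⟨Q, hQ, hsupp, rfl⟩
    have hj : ∀ j, shEnt (marg Q j) ≤ renyiEnt α (fun a => marg P j a / N) +
        (α/(1-α) * Real.logb 2 N + α/(1-α) * klD Q P) := by
      intro j
      have h1 := varBound ⟨hα0, hα1⟩ (marg P j) (marg Q j) (marg_nonneg hP0 j)
        ⟨marg_nonneg hQ.1 j, by rw [marg_sum, hQ.2]⟩ (marg_supp hP0 hsupp j)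
      have h2 := klD_marg_le Q P hQ.1 hP0 hsupp j
      have h3 := hrenyi j
      have h4 := mul_le_mul_of_nonneg_left h2 hc
      linarith
    have hsum : ∑ j, θ j * shEnt (marg Q j) ≤
        ∑ j, θ j * (renyiEnt α (fun a => marg P j a / N) +
          (α/(1-α) * Real.logb 2 N + α/(1-α) * klD Q P)) :=
      Finset.sum_le_sum (fun j _ => mul_le_mul_of_nonneg_left (hj j) (hθ.1 j))
    have hexp : ∑ j, θ j * (renyiEnt α (fun a => marg P j a / N) +
          (α/(1-α) * Real.logb 2 N + α/(1-α) * klD Q P)) =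
        (∑ j, θ j * renyiEnt α (fun a => marg P j a / N)) +
          (α/(1-α) * Real.logb 2 N + α/(1-α) * klD Q P) := by
      rw [Finset.sum_congr rfl (fun j _ => mul_add (θ j) _ _), Finset.sum_add_distrib,
        ← Finset.sum_mul, hθ.2, one_mul]
    linarith
  constructor
  · rw [Hat]
    exact csSup_le hne hbound
  · rw [Hat]
    apply csSup_le hne
    intro v hv
    refine le_trans (hbound v hv) ?_
    have hper : ∀ j, renyiEnt α (fun a => marg P j a / N) ≤
        Real.logb 2 (Set.ncard {a : 𝒳 j | marg P j a ≠ 0}) := by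
      intro j
      have hprob : probVec (fun a => marg P j a / N) :=
        ⟨fun a => div_nonneg (marg_nonneg hP0 j a) hNpos.le,
          by rw [← Finset.sum_div, marg_sum, div_self hNpos.ne']⟩
      have h := renyi_le_logb_card ⟨hα0, hα1⟩ _ hprob
      have hset : {a : 𝒳 j | marg P j a / N ≠ 0} = {a : 𝒳 j | marg P j a ≠ 0} := by
        ext a
        simp [div_eq_zero_iff, hNpos.ne']
      rwa [hset] at h
    have : (∑ j, θ j * renyiEnt α (fun a => marg P j a / N)) ≤
        ∑ j, θ j * Real.logb 2 (Set.ncard {a : 𝒳 j | marg P j a ≠ 0}) :=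
      Finset.sum_le_sum (fun j _ => mul_le_mul_of_nonneg_left (hper j) (hθ.1 j))
    linarith
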